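/- arXiv:2309.05004 — 2 statements merged into one kernel-verified Lean document; each statement's English description precedes it below -/
import Mathlib

section
/- Ballistic inequality: let V = {−1,+1}, let C_K, T, d, d_μ, C̄ > 0 with d_μ ≤ d < T, and let σ₁ : V → [0, 2C_K]. Let φ₁ : ℝ → [0,∞) be integrable, vanish outside [−d, d], be symmetric (φ₁(−x) = φ₁(x)) and nonincreasing in |x|, and let μ₁ = C̄ · 1_{[−T−d_μ, −T+d_μ]}. Define the ballistic solutions f⁰(t,x,w) = e^{−t σ₁(w)} φ₁(x − wt) and g⁰(t,x,w) = e^{−(T−t) σ₁(w)} μ₁(x + w(T−t)) for w ∈ V, and set C_{φμ} = ∫_ℝ φ₁(x) μ₁(x − T) dx. Let I₁ = [a₀, a₁] be an interval with a₀ ≤ −T−d and a₁ ≥ d. Then, for (v, v') = (+1, −1), the quantity B := |∫₀^T ∫_{I₁} f⁰(t,x,v') (g⁰(t,x,v') − g⁰(t,x,v)) dx dt| − |∫₀^T ∫_{I₁} f⁰(t,x,v) (g⁰(t,x,v) − g⁰(t,x,v')) dx dt| satisfies B ≥ C_{φμ} (e^{−2 C_K T} T − (d_μ + d)); in particular B >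 0 whenever (d + d_μ)/T < e^{−2 C_K T}. -/
/-!
Integrating out `x` turns every entry into a time integral of window masses
`W(c) = ∫_{c-d_μ}^{c+d_μ} φ₁`, the mass of `φ₁` seen by the measurement window at relative
displacement `c`. For `v' = -1` the forward density and the adjoint window travel together,
so their overlap is `C̄ W(0) = C_{φμ}` at all times, damped by at most `e^{-Tσ₁(-1)}`. In the
mixed pairings the two move apart, with displacement `2t` or `2(T - t)`, so they overlap only
during a time `(d + d_μ)/2`, and then by at most `C_{φμ}`, because a window centred at the peak
of a radially nonincreasing `φ₁` captures the most mass; the two right-movers never meet.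
-/

open MeasureTheory Real Set

noncomputable section

def windowIntegral (φ : ℝ → ℝ) (δ c : ℝ) : ℝ := ∫ x in (c - δ)..(c + δ), φ x

def boxFunction (C m δ : ℝ) : ℝ → ℝ := (Icc (m - δ) (m + δ)).indicator fun _ => C

/-- `∫ f⁰(t,x,+1) g⁰(t,x,-1) dx` for the measurement window `boxFunction C (-T) δ`. -/
def crossOverlap (φ : ℝ → ℝ) (C δ T σp σm t : ℝ) : ℝ :=
  exp (-t * σp) * exp (-(T - t) * σm) * (C * windowIntegral φ δ (-2 * t))

theorem intervalIntegral_le_of_le_of_eq_zero {f : ℝ → ℝ} {a b c M : ℝ} (hac : a ≤ c)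
    (hcb : c ≤ b) (hf : IntervalIntegrable f volume a b) (hle : ∀ t ∈ Icc a c, f t ≤ M)
    (hzero : ∀ t ∈ Icc c b, f t = 0) : ∫ t in a..b, f t ≤ M * (c - a) := by
  have hab := hac.trans hcb
  have hf₁ : IntervalIntegrable f volume a c :=
    hf.mono_set (by rw [uIcc_of_le hac, uIcc_of_le hab]; exact Icc_subset_Icc_right hcb)
  have hf₂ : IntervalIntegrable f volume c b :=
    hf.mono_set (by rw [uIcc_of_le hcb, uIcc_of_le hab]; exact Icc_subset_Icc_left hac)
  rw [← intervalIntegral.integral_add_adjacent_intervals hf₁ hf₂,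
    intervalIntegral.integral_congr (a := c) (g := 0) fun t ht =>
      hzero t (by rwa [uIcc_of_le hcb] at ht)]
  calc (∫ t in a..c, f t) + ∫ t in c..b, (0 : ℝ → ℝ) t ≤ ∫ _ in a..c, M := by
        rw [Pi.zero_def, intervalIntegral.integral_zero, add_zero]
        exact intervalIntegral.integral_mono_on hac hf₁ intervalIntegrable_const hle
    _ = M * (c - a) := by simp [mul_comm]

section windowIntegral

variable {φ : ℝ → ℝ} {δ : ℝ}

theorem windowIntegral_nonneg (hφ : ∀ x, 0 ≤ φ x) (hδ : 0 ≤ δ) (c : ℝ) :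
    0 ≤ windowIntegral φ δ c :=
  intervalIntegral.integral_nonneg (by linarith) fun x _ => hφ x

theorem windowIntegral_eq_zero_of_add_le {d c : ℝ} (hφ : ∀ x, x ∉ Icc (-d) d → φ x = 0)
    (hδ : 0 ≤ δ) (hc : c + δ ≤ -d) : windowIntegral φ δ c = 0 := by
  rw [windowIntegral, intervalIntegral.integral_congr_ae (g := 0)]
  · simp
  · filter_upwards [Measure.ae_ne volume (-d)] with x hx hmem
    rw [uIoc_of_le (by linarith), mem_Ioc] at hmem
    exact hφ x fun h => hx (by linarith [h.1])

theorem continuous_windowIntegral (hφ : Integrable φ) : Continuous (windowIntegral φ δ) := by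
  have hF := hφ.continuous_primitive 0
  have h : ∀ c, windowIntegral φ δ c
      = (∫ x in (0 : ℝ)..(c + δ), φ x) - ∫ x in (0 : ℝ)..(c - δ), φ x := fun c =>
    (intervalIntegral.integral_interval_sub_left hφ.intervalIntegrable
      hφ.intervalIntegrable).symm
  simp_rw [funext h]
  fun_prop

theorem windowIntegral_le_windowIntegral_zero (hφ : Integrable φ)
    (hφ_mono : ∀ x y, |x| ≤ |y| → φ y ≤ φ x) (hδ : 0 ≤ δ) (c : ℝ) :
    windowIntegral φ δ c ≤ windowIntegral φ δ 0 := by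
  -- moving the window by `c` trades the strip `[-δ, c - δ]` for its translate by `2δ`
  have hshift : windowIntegral φ δ 0 - windowIntegral φ δ c
      = (∫ x in (-δ)..(c - δ), φ x) - ∫ x in (-δ)..(c - δ), φ (x + 2 * δ) := by
    rw [windowIntegral, windowIntegral, intervalIntegral.integral_interval_sub_interval_comm
      hφ.intervalIntegrable hφ.intervalIntegrable hφ.intervalIntegrable,
      intervalIntegral.integral_comp_add_right]
    ring_nf
  rw [← sub_nonneg, hshift, sub_nonneg]
  rcases le_total 0 c with hc | hc
  · refine intervalIntegral.integral_mono_on (by linarith)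
      (hφ.comp_add_right _).intervalIntegrable hφ.intervalIntegrable fun x hx => ?_
    exact hφ_mono _ _ (abs_le_abs (by linarith) (by linarith [hx.1]))
  · rw [intervalIntegral.integral_symm, intervalIntegral.integral_symm (c - δ), neg_le_neg_iff]
    refine intervalIntegral.integral_mono_on (by linarith)
      hφ.intervalIntegrable (hφ.comp_add_right _).intervalIntegrable fun x hx => ?_
    refine hφ_mono _ _ ?_
    rw [abs_of_nonpos (by linarith [hx.2] : x ≤ 0)]
    exact abs_le.mpr ⟨by linarith, by linarith [hx.2]⟩

theorem windowIntegral_zero_pos (hφ : Integrable φ) (hφ_nonneg : ∀ x, 0 ≤ φ x)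
    (hφ_mono : ∀ x y, |x| ≤ |y| → φ y ≤ φ x) (hφ_pos : 0 < ∫ x, φ x) (hδ : 0 < δ) :
    0 < windowIntegral φ δ 0 := by
  rw [windowIntegral, zero_sub, zero_add]
  -- either `φ ≥ φ δ > 0` on the window, or `φ` vanishes off the window
  rcases (hφ_nonneg δ).lt_or_eq with hφδ | hφδ
  · calc 0 < ∫ _ in (-δ)..δ, φ δ := by simp; nlinarith
      _ ≤ ∫ x in (-δ)..δ, φ x :=
        intervalIntegral.integral_mono_on (by linarith) intervalIntegrable_const
          hφ.intervalIntegrable fun x hx => hφ_mono _ _ (by rw [abs_of_pos hδ]; exact abs_le.mpr hx)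
  · have hsupp : ∀ x ∉ Icc (-δ) δ, φ x = 0 := fun x hx =>
      have hδx : |δ| ≤ |x| := by
        rw [abs_of_pos hδ]
        by_contra! h
        exact hx (abs_le.mp h.le)
      le_antisymm (hφδ ▸ hφ_mono _ _ hδx) (hφ_nonneg x)
    rwa [intervalIntegral.integral_of_le (by linarith), ← integral_Icc_eq_integral_Ioc,
      setIntegral_eq_integral_of_forall_compl_eq_zero hsupp]

theorem integral_mul_boxFunction (hδ : 0 ≤ δ) (C m s r : ℝ) :
    ∫ x, φ (x + s) * boxFunction C m δ (x - r) = C * windowIntegral φ δ (m + r + s) := by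
  have hshift := integral_sub_right_eq_self (μ := volume)
    (fun y => φ (y + r + s) * boxFunction C m δ y) r
  simp only [sub_add_cancel] at hshift
  simp_rw [hshift, boxFunction, ← indicator_mul_right _ (fun y => φ (y + r + s))]
  rw [integral_indicator measurableSet_Icc, integral_Icc_eq_integral_Ioc,
    ← intervalIntegral.integral_of_le (by linarith), intervalIntegral.integral_mul_const,
    windowIntegral, mul_comm]
  simp_rw [add_assoc, intervalIntegral.integral_comp_add_right φ]
  ring_nf

theorem integrable_mul_boxFunction (hφ : Integrable φ) (C m s r : ℝ) :
    Integrable fun x => φ (x + s) * boxFunction C m δ (x - r) := by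
  simp_rw [boxFunction, ← indicator_comp_right (· - r) (g := fun _ => C), Function.comp_def,
    ← indicator_mul_right _ (fun x => φ (x + s))]
  exact ((hφ.comp_add_right s).mul_const C).indicator (measurableSet_Icc.preimage (by fun_prop))

end windowIntegral

section Ballistic

variable {φ : ℝ → ℝ} {C δ d T σp σm a₀ a₁ : ℝ}

theorem continuous_crossOverlap (hφ : Integrable φ) :
    Continuous (crossOverlap φ C δ T σp σm) := by
  have hW := continuous_windowIntegral (δ := δ) hφ
  unfold crossOverlap
  fun_prop

theorem crossOverlap_nonneg (hφ_nonneg : ∀ x, 0 ≤ φ x) (hC : 0 ≤ C) (hδ : 0 ≤ δ) (t : ℝ) :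
    0 ≤ crossOverlap φ C δ T σp σm t := by
  have := windowIntegral_nonneg hφ_nonneg hδ (-2 * t)
  unfold crossOverlap
  positivity

theorem integral_crossOverlap_le (hφ : Integrable φ) (hφ_nonneg : ∀ x, 0 ≤ φ x)
    (hφ_mono : ∀ x y, |x| ≤ |y| → φ y ≤ φ x) (hφ_supp : ∀ x, x ∉ Icc (-d) d → φ x = 0)
    (hC : 0 ≤ C) (hδ : 0 ≤ δ) (hσp : 0 ≤ σp) (hσm : 0 ≤ σm)
    (hd : 0 ≤ d + δ) (hdT : d + δ ≤ 2 * T) :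
    ∫ t in (0 : ℝ)..T, crossOverlap φ C δ T σp σm t
      ≤ C * windowIntegral φ δ 0 * ((d + δ) / 2) := by
  rw [← sub_zero ((d + δ) / 2)]
  refine intervalIntegral_le_of_le_of_eq_zero (by linarith) (by linarith)
    ((continuous_crossOverlap hφ).intervalIntegrable 0 T) ?_ ?_
  · intro t ht
    have hW := windowIntegral_le_windowIntegral_zero hφ hφ_mono hδ (-2 * t)
    have hW₀ := windowIntegral_nonneg hφ_nonneg hδ (-2 * t)
    have hexp : exp (-t * σp) * exp (-(T - t) * σm) ≤ 1 :=
      mul_le_one₀ (exp_le_one_iff.mpr (by nlinarith [ht.1]))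
        (exp_nonneg _) (exp_le_one_iff.mpr (by nlinarith [ht.2]))
    calc crossOverlap φ C δ T σp σm t ≤ 1 * (C * windowIntegral φ δ 0) := by
          unfold crossOverlap
          gcongr
      _ = C * windowIntegral φ δ 0 := one_mul _
  · intro t ht
    rw [crossOverlap, windowIntegral_eq_zero_of_add_le hφ_supp hδ (by linarith [ht.1]),
      mul_zero, mul_zero]

theorem setIntegral_ballistic_neg (hφ : Integrable φ)
    (hφ_supp : ∀ x, x ∉ Icc (-d) d → φ x = 0) (hδ : 0 ≤ δ)
    (ha₀ : a₀ ≤ -T - d) (ha₁ : d ≤ a₁) {t : ℝ} (ht : t ∈ Icc 0 T) :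
    ∫ x in Icc a₀ a₁, (exp (-t * σm) * φ (x + t)) *
        (exp (-(T - t) * σm) * boxFunction C (-T) δ (x - (T - t))
          - exp (-(T - t) * σp) * boxFunction C (-T) δ (x + (T - t)))
      = exp (-T * σm) * (C * windowIntegral φ δ 0) - crossOverlap φ C δ T σp σm (T - t) := by
  have hvanish : ∀ x ∉ Icc a₀ a₁, φ (x + t) = 0 := fun x hx =>
    hφ_supp _ fun h => hx ⟨by linarith [h.1, ht.2], by linarith [h.2, ht.1]⟩
  have hsplit : ∀ x, (exp (-t * σm) * φ (x + t)) *
        (exp (-(T - t) * σm) * boxFunction C (-T) δ (x - (T - t))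
          - exp (-(T - t) * σp) * boxFunction C (-T) δ (x + (T - t)))
      = exp (-T * σm) * (φ (x + t) * boxFunction C (-T) δ (x - (T - t)))
        - exp (-t * σm) * exp (-(T - t) * σp)
          * (φ (x + t) * boxFunction C (-T) δ (x - (t - T))) := by
    intro x
    rw [show x - (t - T) = x + (T - t) by ring, show -T * σm = -t * σm + -(T - t) * σm by ring,
      exp_add]
    ring
  rw [setIntegral_eq_integral_of_forall_compl_eq_zero fun x hx => by simp [hvanish x hx]]
  simp_rw [hsplit]
  rw [integral_sub ((integrable_mul_boxFunction hφ _ _ _ _).const_mul _)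
    ((integrable_mul_boxFunction hφ _ _ _ _).const_mul _), integral_const_mul, integral_const_mul,
    integral_mul_boxFunction hδ, integral_mul_boxFunction hδ, crossOverlap]
  ring_nf

theorem setIntegral_ballistic_pos (hφ_supp : ∀ x, x ∉ Icc (-d) d → φ x = 0) (hδ : 0 ≤ δ)
    (hδd : δ ≤ d) (hdT : d < T) (ha₀ : a₀ ≤ -T - d) (ha₁ : d ≤ a₁) {t : ℝ} (ht : t ∈ Icc 0 T) :
    ∫ x in Icc a₀ a₁, (exp (-t * σp) * φ (x - t)) *
        (exp (-(T - t) * σp) * boxFunction C (-T) δ (x + (T - t))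
          - exp (-(T - t) * σm) * boxFunction C (-T) δ (x - (T - t)))
      = -crossOverlap φ C δ T σp σm t := by
  have hdisjoint : ∀ x, φ (x - t) * boxFunction C (-T) δ (x + (T - t)) = 0 := by
    intro x
    by_cases hx : x + (T - t) ∈ Icc (-T - δ) (-T + δ)
    · rw [hφ_supp _ fun h => by linarith [h.1, hx.2], zero_mul]
    · rw [boxFunction, indicator_of_notMem hx, mul_zero]
  have hvanish : ∀ x ∉ Icc a₀ a₁, boxFunction C (-T) δ (x - (T - t)) = 0 := fun x hx =>
    indicator_of_notMem (fun h => hx ⟨by linarith [h.1, ht.2], by linarith [h.2, ht.1]⟩) _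
  have hsplit : ∀ x, (exp (-t * σp) * φ (x - t)) *
        (exp (-(T - t) * σp) * boxFunction C (-T) δ (x + (T - t))
          - exp (-(T - t) * σm) * boxFunction C (-T) δ (x - (T - t)))
      = -(exp (-t * σp) * exp (-(T - t) * σm)
          * (φ (x + -t) * boxFunction C (-T) δ (x - (T - t)))) := by
    intro x
    rw [← sub_eq_add_neg]
    linear_combination exp (-t * σp) * exp (-(T - t) * σp) * hdisjoint x
  rw [setIntegral_eq_integral_of_forall_compl_eq_zero fun x hx => by
    rw [hsplit, hvanish x hx, mul_zero, mul_zero, neg_zero]]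
  simp_rw [hsplit]
  rw [integral_neg, integral_const_mul, integral_mul_boxFunction hδ, crossOverlap]
  ring_nf

theorem integral_ballistic_neg (hφ : Integrable φ)
    (hφ_supp : ∀ x, x ∉ Icc (-d) d → φ x = 0) (hδ : 0 ≤ δ) (hT : 0 ≤ T)
    (ha₀ : a₀ ≤ -T - d) (ha₁ : d ≤ a₁) :
    ∫ t in (0 : ℝ)..T, ∫ x in Icc a₀ a₁, (exp (-t * σm) * φ (x + t)) *
        (exp (-(T - t) * σm) * boxFunction C (-T) δ (x - (T - t))
          - exp (-(T - t) * σp) * boxFunction C (-T) δ (x + (T - t)))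
      = T * (exp (-T * σm) * (C * windowIntegral φ δ 0))
        - ∫ t in (0 : ℝ)..T, crossOverlap φ C δ T σp σm t := by
  rw [intervalIntegral.integral_congr fun t ht => setIntegral_ballistic_neg hφ hφ_supp hδ ha₀ ha₁
      (by rwa [uIcc_of_le hT] at ht),
    intervalIntegral.integral_sub (g := fun t => crossOverlap φ C δ T σp σm (T - t))
      intervalIntegrable_const
      (((continuous_crossOverlap hφ).comp (continuous_sub_left T)).intervalIntegrable 0 T),
    intervalIntegral.integral_comp_sub_left (crossOverlap φ C δ T σp σm),
    intervalIntegral.integral_const, sub_self, sub_zero, smul_eq_mul]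

theorem integral_ballistic_pos (hφ_supp : ∀ x, x ∉ Icc (-d) d → φ x = 0) (hδ : 0 ≤ δ)
    (hδd : δ ≤ d) (hdT : d < T) (ha₀ : a₀ ≤ -T - d) (ha₁ : d ≤ a₁) :
    ∫ t in (0 : ℝ)..T, ∫ x in Icc a₀ a₁, (exp (-t * σp) * φ (x - t)) *
        (exp (-(T - t) * σp) * boxFunction C (-T) δ (x + (T - t))
          - exp (-(T - t) * σm) * boxFunction C (-T) δ (x - (T - t)))
      = -∫ t in (0 : ℝ)..T, crossOverlap φ C δ T σp σm t := by
  rw [intervalIntegral.integral_congr fun t ht => setIntegral_ballistic_pos hφ_supp hδ hδd hdT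
      ha₀ ha₁ (by rwa [uIcc_of_le (hδ.trans hδd |>.trans hdT.le)] at ht),
    intervalIntegral.integral_neg]

end Ballistic

theorem ballistic_inequality_general
    (CK T d dμ Cb a₀ a₁ Cφμ B : ℝ)
    (hT : 0 < T) (hdμ : 0 < dμ) (hCb : 0 < Cb)
    (hdμd : dμ ≤ d) (hdT : d < T)
    (σ₁ : ℝ → ℝ) (hσ : ∀ w ∈ ({1, -1} : Set ℝ), 0 ≤ σ₁ w ∧ σ₁ w ≤ 2 * CK)
    (φ₁ : ℝ → ℝ) (hφ_int : Integrable φ₁) (hφ_nonneg : ∀ x, 0 ≤ φ₁ x)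
    (hφ_supp : ∀ x : ℝ, x ∉ Set.Icc (-d) d → φ₁ x = 0)
    (hφ_mono : ∀ x y : ℝ, |x| ≤ |y| → φ₁ y ≤ φ₁ x)
    (hφ_pos : 0 < ∫ x : ℝ, φ₁ x)
    (μ₁ : ℝ → ℝ)
    (hμ₁ : ∀ x : ℝ, μ₁ x = if x ∈ Set.Icc (-T - dμ) (-T + dμ) then Cb else 0)
    (ha₀ : a₀ ≤ -T - d) (ha₁ : d ≤ a₁)
    (hCφμ : Cφμ = ∫ x : ℝ, φ₁ x * μ₁ (x - T))
    (hB : B =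
      |∫ t in (0 : ℝ)..T, ∫ x in Set.Icc a₀ a₁,
          (Real.exp (-t * σ₁ (-1)) * φ₁ (x + t)) *
            (Real.exp (-(T - t) * σ₁ (-1)) * μ₁ (x - (T - t))
              - Real.exp (-(T - t) * σ₁ 1) * μ₁ (x + (T - t)))| -
      |∫ t in (0 : ℝ)..T, ∫ x in Set.Icc a₀ a₁,
          (Real.exp (-t * σ₁ 1) * φ₁ (x - t)) *
            (Real.exp (-(T - t) * σ₁ 1) * μ₁ (x + (T - t))
              - Real.exp (-(T - t) * σ₁ (-1)) * μ₁ (x - (T - t)))|) :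
    Cφμ * (Real.exp (-2 * CK * T) * T - (dμ + d)) ≤ B ∧
      ((d + dμ) / T < Real.exp (-2 * CK * T) → 0 < B) := by
  obtain ⟨hσp, -⟩ := hσ 1 (by simp)
  obtain ⟨hσm, hσm_le⟩ := hσ (-1) (by simp)
  obtain rfl : μ₁ = boxFunction Cb (-T) dμ :=
    funext fun x => by rw [hμ₁, boxFunction, indicator_apply]
  have hCφμ_eq : Cφμ = Cb * windowIntegral φ₁ dμ 0 := by
    simpa [← hCφμ] using integral_mul_boxFunction (φ := φ₁) hdμ.le Cb (-T) 0 T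
  have hCφμ_pos : 0 < Cφμ :=
    hCφμ_eq ▸ mul_pos hCb (windowIntegral_zero_pos hφ_int hφ_nonneg hφ_mono hφ_pos hdμ)
  set I := ∫ t in (0 : ℝ)..T, crossOverlap φ₁ Cb dμ T (σ₁ 1) (σ₁ (-1)) t
  have hI₀ : 0 ≤ I := intervalIntegral.integral_nonneg hT.le fun t _ =>
    crossOverlap_nonneg hφ_nonneg hCb.le hdμ.le t
  have hI : I ≤ Cφμ * ((d + dμ) / 2) := hCφμ_eq ▸ integral_crossOverlap_le hφ_int hφ_nonneg
    hφ_mono hφ_supp hCb.le hdμ.le hσp hσm (by linarith) (by linarith)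
  have hB_eq : B = |T * (exp (-T * σ₁ (-1)) * Cφμ) - I| - I := by
    rw [hB, integral_ballistic_neg hφ_int hφ_supp hdμ.le hT.le ha₀ ha₁,
      integral_ballistic_pos hφ_supp hdμ.le hdμd hdT ha₀ ha₁, abs_neg, abs_of_nonneg hI₀, hCφμ_eq]
  have hdecay : exp (-2 * CK * T) * T ≤ exp (-T * σ₁ (-1)) * T :=
    mul_le_mul_of_nonneg_right (exp_le_exp.mpr (by nlinarith)) hT.le
  have hlower : Cφμ * (exp (-2 * CK * T) * T - (dμ + d)) ≤ B := by
    rw [hB_eq]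
    linarith [le_abs_self (T * (exp (-T * σ₁ (-1)) * Cφμ) - I),
      mul_le_mul_of_nonneg_left hdecay hCφμ_pos.le]
  refine ⟨hlower, fun h => hlower.trans_lt' (mul_pos hCφμ_pos ?_)⟩
  rw [div_lt_iff₀ hT] at h
  linarith

/-- ballistic inequality for the design analysis. With the ballistic parts
`f⁰(t,x,w) = e^{−tσ₁(w)} φ₁(x−wt)` and `g⁰(t,x,w) = e^{−(T−t)σ₁(w)} μ₁(x+w(T−t))`, the
quantity `B` (difference of the two absolute ballistic gradient entries for
`(v,v') = (+1,−1)`) satisfies `B ≥ C_{φμ}(e^{−2C_K T} T − (d_μ + d))`, which is positive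
when `(d+d_μ)/T < e^{−2C_K T}`. -/
theorem ballistic_inequality
    (CK T d dμ Cb a₀ a₁ Cφμ B : ℝ)
    (hCK : 0 < CK) (hT : 0 < T) (hd : 0 < d) (hdμ : 0 < dμ) (hCb : 0 < Cb)
    (hdμd : dμ ≤ d) (hdT : d < T)
    (σ₁ : ℝ → ℝ) (hσ : ∀ w ∈ ({1, -1} : Set ℝ), 0 ≤ σ₁ w ∧ σ₁ w ≤ 2 * CK)
    (φ₁ : ℝ → ℝ) (hφ_int : Integrable φ₁) (hφ_nonneg : ∀ x, 0 ≤ φ₁ x)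
    (hφ_supp : ∀ x : ℝ, x ∉ Set.Icc (-d) d → φ₁ x = 0)
    (hφ_symm : ∀ x : ℝ, φ₁ (-x) = φ₁ x)
    (hφ_mono : ∀ x y : ℝ, |x| ≤ |y| → φ₁ y ≤ φ₁ x)
    (hφ_pos : 0 < ∫ x : ℝ, φ₁ x)
    (μ₁ : ℝ → ℝ)
    (hμ₁ : ∀ x : ℝ, μ₁ x = if x ∈ Set.Icc (-T - dμ) (-T + dμ) then Cb else 0)
    (ha₀ : a₀ ≤ -T - d) (ha₁ : d ≤ a₁)
    (hCφμ : Cφμ = ∫ x : ℝ, φ₁ x * μ₁ (x - T))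
    (hB : B =
      |∫ t in (0 : ℝ)..T, ∫ x in Set.Icc a₀ a₁,
          (Real.exp (-t * σ₁ (-1)) * φ₁ (x + t)) *
            (Real.exp (-(T - t) * σ₁ (-1)) * μ₁ (x - (T - t))
              - Real.exp (-(T - t) * σ₁ 1) * μ₁ (x + (T - t)))| -
      |∫ t in (0 : ℝ)..T, ∫ x in Set.Icc a₀ a₁,
          (Real.exp (-t * σ₁ 1) * φ₁ (x - t)) *
            (Real.exp (-(T - t) * σ₁ 1) * μ₁ (x + (T - t))
              - Real.exp (-(T - t) * σ₁ (-1)) * μ₁ (x - (T - t)))|) :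
    Cφμ * (Real.exp (-2 * CK * T) * T - (dμ + d)) ≤ B ∧
      ((d + dμ) / T < Real.exp (-2 * CK * T) → 0 < B) :=
  ballistic_inequality_general CK T d dμ Cb a₀ a₁ Cφμ B hT hdμ hCb hdμd hdT σ₁ hσ φ₁ hφ_int
    hφ_nonneg hφ_supp hφ_mono hφ_pos μ₁ hμ₁ ha₀ ha₁ hCφμ hB
end
end

section
/- Iterated scattering bound: let V = {−1,+1}, let K₁ : V × V → [0, C_K], σ₁(w) = Σ_{w'} K₁(w',w), L₁(f)(w) = Σ_{w'} K₁(w,w') f(w'), L̃₁(g)(w) = Σ_{w'} K₁(w',w) g(w'). Let φ₁ : ℝ → [0,∞) and μ₁ : ℝ → [0,∞) be integrable and bounded, and suppose C_{φμ} is a constant with ∫_ℝ φ₁(x + a) μ₁(x − T + b) dx ≤ C_{φμ} for all a, b ∈ ℝ. Define f⁰(t,x,w) = e^{−t σ₁(w)} φ₁(x − wt) and g⁰(t,x,w) = e^{−(T−t) σ₁(w)} μ₁(x + w(T−t)), and recursively, for k, n ≥ 1, let f^{(k)} be the mild solution of ∂_t f^{(k)} + w ∂_x f^{(k)} = −σ₁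 f^{(k)} + L₁(f^{(k−1)}) with zero initial datum and g^{(n)} the mild solution of −∂_t g^{(n)} − w ∂_x g^{(n)} = −σ₁ g^{(n)} + L̃₁(g^{(n−1)}) with zero final datum. Then for all k, n ≥ 0 and all v, v' ∈ V: 0 ≤ ∫₀^T ∫_ℝ f^{(k)}(t,x,v') g^{(n)}(t,x,v) dx dt ≤ (2 C_K)^{n+k} T^{n+k+1} C_{φμ}, and hence |∫₀^T ∫_I f^{(k)}(t,x,v') (g^{(n)}(t,x,v') − g^{(n)}(t,x,v)) dx dt| ≤ 2 (2 C_K)^{n+k} T^{n+k+1} C_{φμ} for every measurable I ⊆ ℝ. -/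
open MeasureTheory Real Set

noncomputable section

/-!
The data `φ₁`, `μ₁` are only a.e. measurable, so replace them by bounded Borel representatives;
the source iterations built from them agree with `fseq`, `gseq` for a.e. `x`, and reversing time
and velocity turns the adjoint iteration into a forward one with kernel `K₁ (-w') (-w)`. For two
forward iterations the translated pairing `∫ f⁽ᵏ⁾(t₁, x + a, v') g⁽ⁿ⁾(t₂, x, v) dx` is at most
`(2 C_K T)^(k+n) C_{φμ}`: for `k = n = 0` this is the overlap hypothesis, because `e^{-tσ} ≤ 1`;
a Duhamel step in the first factor costs at most `2 C_K T`, by Tonelli, since the free flight only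
shifts the translation parameter `a`; and translating `x` exchanges the two factors. Integrating
over `t ∈ [0, T]` gives the bounds.
-/

local notation "𝕍" => ({1, -1} : Set ℝ)

lemma neg_mem_pm_one {v : ℝ} (hv : v ∈ 𝕍) : -v ∈ 𝕍 := by
  rcases hv with rfl | rfl <;> simp

lemma ae_comp_affine {p : ℝ → Prop} (h : ∀ᵐ y, p y) {a : ℝ} (ha : a ≠ 0) (b : ℝ) :
    ∀ᵐ s, p (a * s + b) :=
  ((quasiMeasurePreserving_add_right volume b).comp
    (Measure.quasiMeasurePreserving_smul volume ha)).ae h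

lemma MeasureTheory.AEStronglyMeasurable.exists_measurable_mem_Icc {α : Type*} [MeasurableSpace α]
    {μ : Measure α} {f : α → ℝ} (hf : AEStronglyMeasurable f μ) {a b : ℝ} (hab : a ≤ b)
    (hf_mem : ∀ x, f x ∈ Icc a b) :
    ∃ g : α → ℝ, Measurable g ∧ (∀ x, g x ∈ Icc a b) ∧ f =ᵐ[μ] g := by
  refine ⟨fun x => max a (min (hf.mk f x) b),
    (measurable_const.max (hf.stronglyMeasurable_mk.measurable.min measurable_const)),
    fun x => ⟨le_max_left _ _, max_le hab (min_le_right _ _)⟩, ?_⟩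
  filter_upwards [hf.ae_eq_mk] with x hx
  rw [← hx, min_eq_left (hf_mem x).2, max_eq_right (hf_mem x).1]

lemma abs_setIntegral_sub_le {α : Type*} [MeasurableSpace α] {μ : Measure α} {f g : α → ℝ}
    {b : ℝ} (hf : Integrable f μ) (hg : Integrable g μ) (hf₀ : 0 ≤ᵐ[μ] f) (hg₀ : 0 ≤ᵐ[μ] g)
    (hfb : ∫ x, f x ∂μ ≤ b) (hgb : ∫ x, g x ∂μ ≤ b) (s : Set α) :
    |∫ x in s, (f x - g x) ∂μ| ≤ b := by
  rw [integral_sub hf.integrableOn hg.integrableOn]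
  exact abs_sub_le_of_nonneg_of_le (integral_nonneg_of_ae (ae_restrict_of_ae hf₀))
    ((setIntegral_le_integral hf hf₀).trans hfb) (integral_nonneg_of_ae (ae_restrict_of_ae hg₀))
    ((setIntegral_le_integral hg hg₀).trans hgb)

lemma integral_const_mul_add_mul {α : Type*} [MeasurableSpace α] {μ : Measure α}
    {f₁ f₂ : α → ℝ} (hf₁ : Integrable f₁ μ) (hf₂ : Integrable f₂ μ) (e k₁ k₂ : ℝ) :
    ∫ x, e * (k₁ * f₁ x + k₂ * f₂ x) ∂μ = e * (k₁ * ∫ x, f₁ x ∂μ + k₂ * ∫ x, f₂ x ∂μ) := by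
  rw [integral_const_mul, integral_add (hf₁.const_mul _) (hf₂.const_mul _), integral_const_mul,
    integral_const_mul]

lemma mul_add_mul_mem_Icc {e k₁ k₂ a₁ a₂ c b : ℝ} (he : e ∈ Icc 0 1) (hk₁ : k₁ ∈ Icc 0 c)
    (hk₂ : k₂ ∈ Icc 0 c) (ha₁ : a₁ ∈ Icc 0 b) (ha₂ : a₂ ∈ Icc 0 b) :
    e * (k₁ * a₁ + k₂ * a₂) ∈ Icc 0 (2 * c * b) := by
  obtain ⟨he₀, he₁⟩ := he
  have h₁ : k₁ * a₁ ≤ c * b := mul_le_mul hk₁.2 ha₁.2 ha₁.1 (hk₁.1.trans hk₁.2)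
  have h₂ : k₂ * a₂ ≤ c * b := mul_le_mul hk₂.2 ha₂.2 ha₂.1 (hk₂.1.trans hk₂.2)
  have hsum : 0 ≤ k₁ * a₁ + k₂ * a₂ := add_nonneg (mul_nonneg hk₁.1 ha₁.1) (mul_nonneg hk₂.1 ha₂.1)
  refine ⟨mul_nonneg he₀ hsum, ?_⟩
  calc e * (k₁ * a₁ + k₂ * a₂) ≤ k₁ * a₁ + k₂ * a₂ := mul_le_of_le_one_left hsum he₁
    _ ≤ 2 * c * b := by linarith

lemma abs_intervalIntegral_le {f : ℝ → ℝ} {t b : ℝ} (ht : 0 ≤ t)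
    (hf : ∀ s ∈ Ioc 0 t, |f s| ≤ b) : |∫ s in 0..t, f s| ≤ t * b := by
  have := intervalIntegral.norm_integral_le_of_norm_le_const (f := f) (a := 0) (b := t) (C := b)
    (fun s hs => by rw [uIoc_of_le ht] at hs; exact hf s hs)
  rwa [sub_zero, abs_of_nonneg ht, mul_comm] at this

lemma intervalIntegral_mem_Icc {f : ℝ → ℝ} {t b : ℝ} (ht : 0 ≤ t)
    (hf : ∀ s ∈ Icc 0 t, f s ∈ Icc 0 b) : ∫ s in 0..t, f s ∈ Icc 0 (t * b) :=
  ⟨intervalIntegral.integral_nonneg ht fun s hs => (hf s hs).1,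
    (le_abs_self _).trans <| abs_intervalIntegral_le ht fun s hs => by
      rw [abs_of_nonneg (hf s (Ioc_subset_Icc_self hs)).1]; exact (hf s (Ioc_subset_Icc_self hs)).2⟩

lemma measurable_intervalIntegral_zero {α : Type*} [MeasurableSpace α] {f : α → ℝ → ℝ}
    (hf : Measurable (Function.uncurry f)) {a : α → ℝ} (ha : Measurable a) :
    Measurable fun p => ∫ s in 0..a p, f p s := by
  have hscale : (fun p => ∫ s in 0..a p, f p s) =
      fun p => a p * ∫ u in Ioc (0 : ℝ) 1, f p (a p * u) := by
    ext p
    rw [← intervalIntegral.integral_of_le zero_le_one, ← smul_eq_mul,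
      intervalIntegral.smul_integral_comp_mul_left, mul_zero, mul_one]
  rw [hscale]
  have hf' : Measurable (Function.uncurry fun p u => f p (a p * u)) :=
    hf.comp (measurable_fst.prodMk ((ha.comp measurable_fst).mul measurable_snd))
  exact ha.mul hf'.stronglyMeasurable.integral_prod_right.measurable

lemma integrable_prod_Ioc_of_slices {F : ℝ → ℝ → ℝ} (hF : Measurable (Function.uncurry F))
    {t B : ℝ} (hF₀ : ∀ s ∈ Ioc 0 t, ∀ x, 0 ≤ F s x) (hFi : ∀ s ∈ Ioc 0 t, Integrable (F s))
    (hFB : ∀ s ∈ Ioc 0 t, ∫ x, F s x ≤ B) :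
    Integrable (Function.uncurry F) ((volume.restrict (Ioc 0 t)).prod volume) := by
  rw [integrable_prod_iff hF.aestronglyMeasurable]
  refine ⟨(ae_restrict_iff' measurableSet_Ioc).2 (ae_of_all _ hFi), ?_⟩
  refine Measure.integrableOn_of_bounded (M := B) (by simp)
    (hF.norm.stronglyMeasurable.integral_prod_right').aestronglyMeasurable ?_
  filter_upwards [ae_restrict_mem measurableSet_Ioc] with s hs
  have hnorm : ∫ x, ‖F s x‖ = ∫ x, F s x :=
    integral_congr_ae (ae_of_all _ fun x => norm_of_nonneg (hF₀ s hs x))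
  simp only [Function.uncurry_apply_pair, hnorm]
  rw [norm_of_nonneg (integral_nonneg (hF₀ s hs))]
  exact hFB s hs

lemma integrable_and_integral_le_of_slices {F : ℝ → ℝ → ℝ} (hF : Measurable (Function.uncurry F))
    {t B : ℝ} (ht : 0 ≤ t) (hF₀ : ∀ s ∈ Ioc 0 t, ∀ x, 0 ≤ F s x)
    (hFi : ∀ s ∈ Ioc 0 t, Integrable (F s)) (hFB : ∀ s ∈ Ioc 0 t, ∫ x, F s x ≤ B) :
    Integrable (fun x => ∫ s in 0..t, F s x) ∧ ∫ x, ∫ s in 0..t, F s x ≤ t * B := by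
  have hP := integrable_prod_Ioc_of_slices hF hF₀ hFi hFB
  simp only [intervalIntegral.integral_of_le ht]
  refine ⟨hP.integral_prod_right, ?_⟩
  rw [← integral_integral_swap hP]
  calc ∫ s in Ioc 0 t, ∫ x, F s x ≤ ∫ _ in Ioc 0 t, B :=
        setIntegral_mono_on hP.integral_prod_left (integrableOn_const (by simp))
          measurableSet_Ioc hFB
    _ = t * B := by simp [ht]

def IsSourceIteration (K : ℝ → ℝ → ℝ) (σ ψ : ℝ → ℝ) (f : ℕ → ℝ → ℝ → ℝ → ℝ) : Prop :=
  (∀ t x : ℝ, ∀ w ∈ 𝕍, f 0 t x w = exp (-t * σ w) * ψ (x - w * t)) ∧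
  ∀ k : ℕ, ∀ t x : ℝ, ∀ w ∈ 𝕍, f (k + 1) t x w = ∫ s in (0 : ℝ)..t, exp (-s * σ w) *
    (K w 1 * f k (t - s) (x - w * s) 1 + K w (-1) * f k (t - s) (x - w * s) (-1))

def IsAdjointSourceIteration (K : ℝ → ℝ → ℝ) (σ ψ : ℝ → ℝ) (T : ℝ)
    (g : ℕ → ℝ → ℝ → ℝ → ℝ) : Prop :=
  (∀ t x : ℝ, ∀ w ∈ 𝕍, g 0 t x w = exp (-(T - t) * σ w) * ψ (x + w * (T - t))) ∧
  ∀ n : ℕ, ∀ t x : ℝ, ∀ w ∈ 𝕍, g (n + 1) t x w = ∫ s in (0 : ℝ)..(T - t), exp (-s * σ w) *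
    (K 1 w * g n (t + s) (x + w * s) 1 + K (-1) w * g n (t + s) (x + w * s) (-1))

lemma IsAdjointSourceIteration.timeReversal {K : ℝ → ℝ → ℝ} {σ ψ : ℝ → ℝ} {T : ℝ}
    {g : ℕ → ℝ → ℝ → ℝ → ℝ} (hg : IsAdjointSourceIteration K σ ψ T g) :
    IsSourceIteration (fun w w' => K (-w') (-w)) (fun w => σ (-w)) ψ
      (fun n t x w => g n (T - t) x (-w)) := by
  refine ⟨fun t x w hw => ?_, fun n t x w hw => ?_⟩ <;> beta_reduce
  · rw [hg.1 _ x _ (neg_mem_pm_one hw), sub_sub_cancel, neg_mul w, ← sub_eq_add_neg]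
  · rw [hg.2 n _ x _ (neg_mem_pm_one hw), sub_sub_cancel]
    refine intervalIntegral.integral_congr fun s _ => ?_
    simp only [neg_neg, neg_mul w, ← sub_eq_add_neg, sub_sub_eq_add_sub, add_sub_right_comm T s t]
    ring

namespace IsSourceIteration

variable {K : ℝ → ℝ → ℝ} {σ ψ ψ' : ℝ → ℝ} {f g : ℕ → ℝ → ℝ → ℝ → ℝ}

/-- Along a free flight the foot `x - w t` of the characteristic is fixed; after a change of
velocity `w' ≠ w` at time `s` it moves affinely in `s`, so it avoids the null set where `ψ ≠ ψ'`
for almost every `s`. -/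
lemma eq_of_eq_foot (hf : IsSourceIteration K σ ψ f) (hg : IsSourceIteration K σ ψ' g)
    (hψ : ψ =ᵐ[volume] ψ') (k : ℕ) :
    ∀ w ∈ 𝕍, ∀ t x : ℝ, ψ (x - w * t) = ψ' (x - w * t) → f k t x w = g k t x w := by
  induction k with
  | zero =>
    intro w hw t x hx
    rw [hf.1 t x w hw, hg.1 t x w hw, hx]
  | succ k ih =>
    intro w hw t x hx
    rw [hf.2 k t x w hw, hg.2 k t x w hw]
    have hslice : ∀ w' ∈ 𝕍, ∀ᵐ s, f k (t - s) (x - w * s) w' = g k (t - s) (x - w * s) w' := by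
      intro w' hw'
      by_cases hww : w' = w
      · subst hww
        refine ae_of_all _ fun s => ih w' hw' _ _ ?_
        rwa [show x - w' * s - w' * (t - s) = x - w' * t by ring]
      · filter_upwards [ae_comp_affine hψ (sub_ne_zero.2 hww) (x - w' * t)] with s hs
        refine ih w' hw' _ _ ?_
        rwa [show x - w * s - w' * (t - s) = (w' - w) * s + (x - w' * t) by ring]
    refine intervalIntegral.integral_congr_ae ?_
    filter_upwards [hslice 1 (by simp), hslice (-1) (by simp)] with s h₁ h₂ _
    rw [h₁, h₂]

lemma ae_eq (hf : IsSourceIteration K σ ψ f) (hg : IsSourceIteration K σ ψ' g)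
    (hψ : ψ =ᵐ[volume] ψ') (k : ℕ) {w : ℝ} (hw : w ∈ 𝕍) (t : ℝ) :
    (fun x => f k t x w) =ᵐ[volume] fun x => g k t x w := by
  filter_upwards [ae_comp_affine hψ one_ne_zero (-(w * t))] with x hx
  exact hf.eq_of_eq_foot hg hψ k w hw t x (by rwa [one_mul, ← sub_eq_add_neg] at hx)

end IsSourceIteration

structure ScatteringData (c : ℝ) where
  K : ℝ → ℝ → ℝ
  σ : ℝ → ℝ
  ψ : ℝ → ℝ
  bound : ℝ
  K_mem : ∀ w ∈ 𝕍, ∀ w' ∈ 𝕍, K w w' ∈ Icc 0 c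
  σ_nonneg : ∀ w ∈ 𝕍, 0 ≤ σ w
  measurable_ψ : Measurable ψ
  ψ_mem : ∀ x, ψ x ∈ Icc 0 bound
  integrable_ψ : Integrable ψ

namespace ScatteringData

variable {c T : ℝ} (D : ScatteringData c)

def iter : ℕ → ℝ → ℝ → ℝ → ℝ
  | 0, t, x, w => exp (-t * D.σ w) * D.ψ (x - w * t)
  | k + 1, t, x, w => ∫ s in (0 : ℝ)..t, exp (-s * D.σ w) *
      (D.K w 1 * iter k (t - s) (x - w * s) 1 + D.K w (-1) * iter k (t - s) (x - w * s) (-1))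

/-- `e^{-sσ(w)} L₁(f⁽ᵏ⁾)(t - s, x - w s, w)`, the integrand of the Duhamel formula. -/
def gain (k : ℕ) (t x w s : ℝ) : ℝ :=
  exp (-s * D.σ w) *
    (D.K w 1 * D.iter k (t - s) (x - w * s) 1 + D.K w (-1) * D.iter k (t - s) (x - w * s) (-1))

lemma iter_succ (k : ℕ) (t x w : ℝ) : D.iter (k + 1) t x w = ∫ s in (0 : ℝ)..t, D.gain k t x w s :=
  rfl

lemma isSourceIteration : IsSourceIteration D.K D.σ D.ψ D.iter :=
  ⟨fun _ _ _ _ => rfl, fun _ _ _ _ _ => rfl⟩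

lemma c_nonneg (D : ScatteringData c) : 0 ≤ c :=
  (D.K_mem 1 (by simp) 1 (by simp)).1.trans (D.K_mem 1 (by simp) 1 (by simp)).2

lemma exp_mem_Icc {s w : ℝ} (hs : 0 ≤ s) (hw : w ∈ 𝕍) : exp (-s * D.σ w) ∈ Icc 0 1 :=
  ⟨(exp_pos _).le, exp_le_one_iff.2 (by nlinarith [D.σ_nonneg w hw])⟩

lemma gain_mem_Icc {k : ℕ} {t x w s b : ℝ} (hw : w ∈ 𝕍) (hs : 0 ≤ s)
    (hk : ∀ w' ∈ 𝕍, D.iter k (t - s) (x - w * s) w' ∈ Icc 0 b) :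
    D.gain k t x w s ∈ Icc 0 (2 * c * b) :=
  mul_add_mul_mem_Icc (D.exp_mem_Icc hs hw) (D.K_mem w hw 1 (by simp))
    (D.K_mem w hw (-1) (by simp)) (hk 1 (by simp)) (hk (-1) (by simp))

lemma measurable_gain {k : ℕ} (hk : ∀ w, Measurable fun p : ℝ × ℝ => D.iter k p.1 p.2 w)
    (w : ℝ) : Measurable fun q : (ℝ × ℝ) × ℝ => D.gain k q.1.1 q.1.2 w q.2 := by
  have hfoot : Measurable fun q : (ℝ × ℝ) × ℝ => (q.1.1 - q.2, q.1.2 - w * q.2) := by fun_prop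
  exact (measurable_snd.neg.mul_const _).exp.mul
    ((((hk 1).comp hfoot).const_mul _).add (((hk (-1)).comp hfoot).const_mul _))

lemma measurable_iter (k : ℕ) (w : ℝ) : Measurable fun p : ℝ × ℝ => D.iter k p.1 p.2 w := by
  induction k generalizing w with
  | zero =>
    have := D.measurable_ψ
    simp only [iter]
    fun_prop
  | succ k ih => exact measurable_intervalIntegral_zero (D.measurable_gain ih w) measurable_fst

lemma iter_mem_Icc (k : ℕ) : ∀ w ∈ 𝕍, ∀ t ∈ Icc 0 T, ∀ x,
    D.iter k t x w ∈ Icc 0 ((2 * c * T) ^ k * D.bound) := by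
  induction k with
  | zero =>
    intro w hw t ht x
    obtain ⟨he₀, he₁⟩ := D.exp_mem_Icc ht.1 hw
    obtain ⟨hψ₀, hψ₁⟩ := D.ψ_mem (x - w * t)
    rw [pow_zero, one_mul]
    exact ⟨mul_nonneg he₀ hψ₀, (mul_le_of_le_one_left hψ₀ he₁).trans hψ₁⟩
  | succ k ih =>
    intro w hw t ht x
    have hgain : ∀ s ∈ Icc 0 t, D.gain k t x w s ∈ Icc 0 (2 * c * ((2 * c * T) ^ k * D.bound)) :=
      fun s hs => D.gain_mem_Icc hw hs.1 fun w' hw' =>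
        ih w' hw' _ ⟨by linarith [hs.2], by linarith [hs.1, ht.2]⟩ _
    have hX := (hgain 0 ⟨le_rfl, ht.1⟩).1.trans (hgain 0 ⟨le_rfl, ht.1⟩).2
    obtain ⟨h₀, h₁⟩ := intervalIntegral_mem_Icc ht.1 hgain
    refine ⟨h₀, h₁.trans ?_⟩
    calc t * (2 * c * ((2 * c * T) ^ k * D.bound))
        ≤ T * (2 * c * ((2 * c * T) ^ k * D.bound)) := mul_le_mul_of_nonneg_right ht.2 hX
      _ = (2 * c * T) ^ (k + 1) * D.bound := by ring

lemma iter_nonneg (k : ℕ) {w t : ℝ} (hw : w ∈ 𝕍) (ht : 0 ≤ t) (x : ℝ) : 0 ≤ D.iter k t x w :=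
  (D.iter_mem_Icc (T := t) k w hw t ⟨ht, le_rfl⟩ x).1

lemma gain_nonneg {k : ℕ} {t x w s : ℝ} (hw : w ∈ 𝕍) (hs : s ∈ Icc 0 t) : 0 ≤ D.gain k t x w s :=
  (D.gain_mem_Icc (b := (2 * c * (t - s)) ^ k * D.bound) hw hs.1 fun w' hw' =>
    D.iter_mem_Icc k w' hw' _ ⟨sub_nonneg.2 hs.2, le_rfl⟩ _).1

lemma measurable_uncurry_gain (k : ℕ) (t w : ℝ) :
    Measurable (Function.uncurry fun s x => D.gain k t x w s) :=
  (D.measurable_gain (D.measurable_iter k) w).comp (f := fun p : ℝ × ℝ => ((t, p.2), p.1))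
    (by fun_prop)

lemma integrable_gain_and_integral_mem_Icc {k : ℕ} {t w s b : ℝ} (hw : w ∈ 𝕍) (hs : 0 ≤ s)
    (hk : ∀ w' ∈ 𝕍, Integrable (fun x => D.iter k (t - s) x w') ∧
      ∫ x, D.iter k (t - s) x w' ∈ Icc 0 b) :
    Integrable (fun x => D.gain k t x w s) ∧ ∫ x, D.gain k t x w s ∈ Icc 0 (2 * c * b) := by
  have hi : ∀ w' ∈ 𝕍, Integrable fun x => D.iter k (t - s) (x - w * s) w' :=
    fun w' hw' => (hk w' hw').1.comp_sub_right _
  have hI : ∀ w' ∈ 𝕍, ∫ x, D.iter k (t - s) (x - w * s) w' ∈ Icc 0 b := fun w' hw' => by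
    rw [integral_sub_right_eq_self (fun y => D.iter k (t - s) y w')]
    exact (hk w' hw').2
  refine ⟨(((hi 1 (by simp)).const_mul _).add ((hi (-1) (by simp)).const_mul _)).const_mul _, ?_⟩
  simp only [gain]
  rw [integral_const_mul_add_mul (hi 1 (by simp)) (hi (-1) (by simp))]
  exact mul_add_mul_mem_Icc (D.exp_mem_Icc hs hw) (D.K_mem w hw 1 (by simp))
    (D.K_mem w hw (-1) (by simp)) (hI 1 (by simp)) (hI (-1) (by simp))

lemma integrable_iter_and_integral_le (k : ℕ) : ∀ w ∈ 𝕍, ∀ t ∈ Icc 0 T,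
    Integrable (fun x => D.iter k t x w) ∧ ∫ x, D.iter k t x w ≤ (2 * c * T) ^ k * ∫ x, D.ψ x := by
  induction k with
  | zero =>
    intro w hw t ht
    refine ⟨(D.integrable_ψ.comp_sub_right (w * t)).const_mul _, ?_⟩
    simp only [iter, integral_const_mul, integral_sub_right_eq_self, pow_zero, one_mul]
    exact mul_le_of_le_one_left (integral_nonneg fun x => (D.ψ_mem x).1) (D.exp_mem_Icc ht.1 hw).2
  | succ k ih =>
    intro w hw t ht
    have hslice : ∀ s ∈ Ioc 0 t, Integrable (fun x => D.gain k t x w s) ∧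
        ∫ x, D.gain k t x w s ∈ Icc 0 (2 * c * ((2 * c * T) ^ k * ∫ x, D.ψ x)) := by
      intro s hs
      have hts : t - s ∈ Icc 0 T := ⟨by linarith [hs.2], by linarith [hs.1, ht.2]⟩
      exact D.integrable_gain_and_integral_mem_Icc hw hs.1.le fun w' hw' => ⟨(ih w' hw' _ hts).1,
        integral_nonneg fun x => D.iter_nonneg k hw' hts.1 x, (ih w' hw' _ hts).2⟩
    obtain ⟨hint, hle⟩ := integrable_and_integral_le_of_slices (D.measurable_uncurry_gain k t w)
      ht.1 (fun s hs x => D.gain_nonneg hw (Ioc_subset_Icc_self hs)) (fun s hs => (hslice s hs).1)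
      (fun s hs => (hslice s hs).2.2)
    refine ⟨hint, hle.trans ?_⟩
    have hX : 0 ≤ 2 * c * ((2 * c * T) ^ k * ∫ x, D.ψ x) := by
      have := D.c_nonneg
      have := ht.1.trans ht.2
      have : 0 ≤ ∫ x, D.ψ x := integral_nonneg fun x => (D.ψ_mem x).1
      positivity
    calc t * (2 * c * ((2 * c * T) ^ k * ∫ x, D.ψ x))
        ≤ T * (2 * c * ((2 * c * T) ^ k * ∫ x, D.ψ x)) := mul_le_mul_of_nonneg_right ht.2 hX
      _ = (2 * c * T) ^ (k + 1) * ∫ x, D.ψ x := by ring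

lemma integrable_iter (k : ℕ) {w t : ℝ} (hw : w ∈ 𝕍) (ht : 0 ≤ t) :
    Integrable fun x => D.iter k t x w :=
  (D.integrable_iter_and_integral_le (T := t) k w hw t ⟨ht, le_rfl⟩).1

lemma integrable_iter_mul (B : ScatteringData c) (k n : ℕ) {v' v t₁ t₂ : ℝ} (hv' : v' ∈ 𝕍)
    (hv : v ∈ 𝕍) (ht₁ : 0 ≤ t₁) (ht₂ : 0 ≤ t₂) (a : ℝ) :
    Integrable fun x => D.iter k t₁ (x + a) v' * B.iter n t₂ x v := by
  have hmeas : Measurable fun x => D.iter k t₁ (x + a) v' :=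
    (D.measurable_iter k v').comp (measurable_const.prodMk (measurable_add_const a))
  refine (B.integrable_iter n hv ht₂).bdd_mul (c := (2 * c * t₁) ^ k * D.bound)
    hmeas.aestronglyMeasurable (ae_of_all _ fun x => ?_)
  obtain ⟨h₀, h₁⟩ := D.iter_mem_Icc k v' hv' t₁ ⟨ht₁, le_rfl⟩ (x + a)
  rwa [norm_of_nonneg h₀]

variable (A B : ScatteringData c) {M : ℝ}

def PairingLE (T M : ℝ) (k n : ℕ) : Prop :=
  ∀ v' ∈ 𝕍, ∀ v ∈ 𝕍, ∀ t₁ ∈ Icc 0 T, ∀ t₂ ∈ Icc 0 T, ∀ a : ℝ,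
    ∫ x, A.iter k t₁ (x + a) v' * B.iter n t₂ x v ≤ (2 * c * T) ^ (k + n) * M

variable {A B}

lemma PairingLE.symm {k n : ℕ} (h : PairingLE A B T M k n) : PairingLE B A T M n k := by
  intro v' hv' v hv t₁ ht₁ t₂ ht₂ a
  have hshift : ∫ x, B.iter n t₁ (x + a) v' * A.iter k t₂ x v =
      ∫ x, A.iter k t₂ (x + -a) v * B.iter n t₁ x v' := by
    rw [← integral_add_right_eq_self (fun x => B.iter n t₁ (x + a) v' * A.iter k t₂ x v) (-a)]
    simp only [neg_add_cancel_right, mul_comm]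
  rw [hshift, Nat.add_comm]
  exact h v hv v' hv' t₂ ht₂ t₁ ht₁ (-a)

lemma pairingLE_zero_zero (hM : ∀ a b, ∫ x, A.ψ (x + a) * B.ψ (x + b) ≤ M) :
    PairingLE A B T M 0 0 := by
  intro v' hv' v hv t₁ ht₁ t₂ ht₂ a
  have hfree : (fun x => A.iter 0 t₁ (x + a) v' * B.iter 0 t₂ x v) = fun x =>
      (exp (-t₁ * A.σ v') * exp (-t₂ * B.σ v)) *
        (A.ψ (x + (a - v' * t₁)) * B.ψ (x + -(v * t₂))) := by
    ext x
    simp only [iter, ← add_sub_assoc, ← sub_eq_add_neg]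
    ring
  have hI : 0 ≤ ∫ x, A.ψ (x + (a - v' * t₁)) * B.ψ (x + -(v * t₂)) :=
    integral_nonneg fun x => mul_nonneg (A.ψ_mem _).1 (B.ψ_mem _).1
  obtain ⟨he₁₀, he₁⟩ := A.exp_mem_Icc ht₁.1 hv'
  obtain ⟨he₂₀, he₂⟩ := B.exp_mem_Icc ht₂.1 hv
  rw [hfree, integral_const_mul, pow_zero, one_mul]
  exact (mul_le_of_le_one_left hI (mul_le_one₀ he₁ he₂₀ he₂)).trans (hM _ _)

lemma PairingLE.integrable_gain_mul_and_integral_le {k n : ℕ} (h : PairingLE A B T M k n)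
    {v' v t₁ t₂ s : ℝ} (hv' : v' ∈ 𝕍) (hv : v ∈ 𝕍) (ht₂ : t₂ ∈ Icc 0 T) (a : ℝ)
    (hs : 0 ≤ s) (hts : t₁ - s ∈ Icc 0 T) :
    Integrable (fun x => A.gain k t₁ (x + a) v' s * B.iter n t₂ x v) ∧
      ∫ x, A.gain k t₁ (x + a) v' s * B.iter n t₂ x v ≤ 2 * c * ((2 * c * T) ^ (k + n) * M) := by
  have hi : ∀ w ∈ 𝕍, Integrable fun x => A.iter k (t₁ - s) (x + (a - v' * s)) w * B.iter n t₂ x v :=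
    fun w hw => A.integrable_iter_mul B k n hw hv hts.1 ht₂.1 _
  have hI : ∀ w ∈ 𝕍, ∫ x, A.iter k (t₁ - s) (x + (a - v' * s)) w * B.iter n t₂ x v ∈
      Icc 0 ((2 * c * T) ^ (k + n) * M) := fun w hw =>
    ⟨integral_nonneg fun x => mul_nonneg (A.iter_nonneg k hw hts.1 _) (B.iter_nonneg n hv ht₂.1 x),
      h w hw v hv _ hts t₂ ht₂ _⟩
  have hcollide : (fun x => A.gain k t₁ (x + a) v' s * B.iter n t₂ x v) = fun x =>
      exp (-s * A.σ v') * (A.K v' 1 * (A.iter k (t₁ - s) (x + (a - v' * s)) 1 * B.iter n t₂ x v)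
        + A.K v' (-1) * (A.iter k (t₁ - s) (x + (a - v' * s)) (-1) * B.iter n t₂ x v)) := by
    ext x
    simp only [gain, add_sub_assoc]
    ring
  rw [hcollide, integral_const_mul_add_mul (hi 1 (by simp)) (hi (-1) (by simp))]
  exact ⟨(((hi 1 (by simp)).const_mul _).add ((hi (-1) (by simp)).const_mul _)).const_mul _,
    (mul_add_mul_mem_Icc (A.exp_mem_Icc hs hv') (A.K_mem v' hv' 1 (by simp))
      (A.K_mem v' hv' (-1) (by simp)) (hI 1 (by simp)) (hI (-1) (by simp))).2⟩

lemma PairingLE.succ_left (hM : 0 ≤ M) {k n : ℕ} (h : PairingLE A B T M k n) :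
    PairingLE A B T M (k + 1) n := by
  intro v' hv' v hv t₁ ht₁ t₂ ht₂ a
  have hslice (s : ℝ) (hs : s ∈ Ioc 0 t₁) :=
    h.integrable_gain_mul_and_integral_le (t₁ := t₁) hv' hv ht₂ a hs.1.le
      ⟨by linarith [hs.2], by linarith [hs.1, ht₁.2]⟩
  have hmeas :
      Measurable (Function.uncurry fun s x => A.gain k t₁ (x + a) v' s * B.iter n t₂ x v) :=
    ((A.measurable_gain (A.measurable_iter k) v').comp (f := fun p : ℝ × ℝ => ((t₁, p.2 + a), p.1))
      (by fun_prop)).mul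
      ((B.measurable_iter n v).comp (f := fun p : ℝ × ℝ => (t₂, p.2)) (by fun_prop))
  have hle := (integrable_and_integral_le_of_slices hmeas ht₁.1
    (fun s hs x =>
      mul_nonneg (A.gain_nonneg hv' (Ioc_subset_Icc_self hs)) (B.iter_nonneg n hv ht₂.1 x))
    (fun s hs => (hslice s hs).1) (fun s hs => (hslice s hs).2)).2
  simp only [iter_succ, ← intervalIntegral.integral_mul_const]
  refine hle.trans ?_
  have hX : 0 ≤ 2 * c * ((2 * c * T) ^ (k + n) * M) := by
    have := A.c_nonneg
    have := ht₁.1.trans ht₁.2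
    positivity
  calc t₁ * (2 * c * ((2 * c * T) ^ (k + n) * M))
      ≤ T * (2 * c * ((2 * c * T) ^ (k + n) * M)) := mul_le_mul_of_nonneg_right ht₁.2 hX
    _ = (2 * c * T) ^ (k + 1 + n) * M := by ring

theorem pairingLE (hM₀ : 0 ≤ M) (hM : ∀ a b, ∫ x, A.ψ (x + a) * B.ψ (x + b) ≤ M) (k n : ℕ) :
    PairingLE A B T M k n := by
  induction k with
  | zero =>
    induction n with
    | zero => exact pairingLE_zero_zero hM
    | succ n ih => exact (ih.symm.succ_left hM₀).symm
  | succ k ih => exact ih.succ_left hM₀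

lemma pairing_of_ae_eq (hM₀ : 0 ≤ M) (hM : ∀ a b, ∫ x, A.ψ (x + a) * B.ψ (x + b) ≤ M)
    {φ μ : ℝ → ℝ} {f g : ℕ → ℝ → ℝ → ℝ → ℝ} (hf : IsSourceIteration A.K A.σ φ f)
    (hφ : φ =ᵐ[volume] A.ψ) (hg : IsSourceIteration B.K B.σ μ fun n t x w => g n (T - t) x (-w))
    (hμ : μ =ᵐ[volume] B.ψ) (k n : ℕ) {v' u t : ℝ} (hv' : v' ∈ 𝕍) (hu : u ∈ 𝕍)
    (ht : t ∈ Icc 0 T) :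
    Integrable (fun x => f k t x v' * g n t x u) ∧ 0 ≤ᵐ[volume] (fun x => f k t x v' * g n t x u) ∧
      ∫ x, f k t x v' * g n t x u ≤ (2 * c * T) ^ (k + n) * M := by
  have hTt : T - t ∈ Icc 0 T := ⟨sub_nonneg.2 ht.2, sub_le_self _ ht.1⟩
  have hfg : (fun x => f k t x v' * g n t x u) =ᵐ[volume]
      fun x => A.iter k t (x + 0) v' * B.iter n (T - t) x (-u) := by
    filter_upwards [hf.ae_eq A.isSourceIteration hφ k hv' t,
      hg.ae_eq B.isSourceIteration hμ n (neg_mem_pm_one hu) (T - t)] with x h₁ h₂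
    simp only [sub_sub_cancel, neg_neg] at h₂
    rw [add_zero, h₁, h₂]
  refine ⟨(A.integrable_iter_mul B k n hv' (neg_mem_pm_one hu) ht.1 hTt.1 0).congr hfg.symm, ?_, ?_⟩
  · filter_upwards [hfg] with x hx
    rw [hx]
    exact mul_nonneg (A.iter_nonneg k hv' ht.1 _) (B.iter_nonneg n (neg_mem_pm_one hu) hTt.1 x)
  · rw [integral_congr_ae hfg]
    exact pairingLE hM₀ hM k n v' hv' (-u) (neg_mem_pm_one hu) t ht (T - t) hTt 0

end ScatteringData

lemma sourceIteration_pairing_le {c T M Cφ Cμ : ℝ} {K : ℝ → ℝ → ℝ} {σ φ μ : ℝ → ℝ}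
    {f g : ℕ → ℝ → ℝ → ℝ → ℝ} (hK : ∀ w ∈ 𝕍, ∀ w' ∈ 𝕍, K w w' ∈ Icc 0 c)
    (hσ : ∀ w ∈ 𝕍, 0 ≤ σ w) (hφ : Integrable φ) (hφ_mem : ∀ x, φ x ∈ Icc 0 Cφ)
    (hμ : Integrable μ) (hμ_mem : ∀ x, μ x ∈ Icc 0 Cμ)
    (hM : ∀ a b, ∫ x, φ (x + a) * μ (x + b) ≤ M)
    (hf : IsSourceIteration K σ φ f) (hg : IsAdjointSourceIteration K σ μ T g) (k n : ℕ)
    {v' u t : ℝ} (hv' : v' ∈ 𝕍) (hu : u ∈ 𝕍) (ht : t ∈ Icc 0 T) :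
    Integrable (fun x => f k t x v' * g n t x u) ∧ 0 ≤ᵐ[volume] (fun x => f k t x v' * g n t x u) ∧
      ∫ x, f k t x v' * g n t x u ≤ (2 * c * T) ^ (k + n) * M := by
  obtain ⟨φ', hφ'_meas, hφ'_mem, hφφ'⟩ :=
    hφ.aestronglyMeasurable.exists_measurable_mem_Icc ((hφ_mem 0).1.trans (hφ_mem 0).2) hφ_mem
  obtain ⟨μ', hμ'_meas, hμ'_mem, hμμ'⟩ :=
    hμ.aestronglyMeasurable.exists_measurable_mem_Icc ((hμ_mem 0).1.trans (hμ_mem 0).2) hμ_mem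
  let A : ScatteringData c := ⟨K, σ, φ', Cφ, hK, hσ, hφ'_meas, hφ'_mem, hφ.congr hφφ'⟩
  let B : ScatteringData c := ⟨fun w w' => K (-w') (-w), fun w => σ (-w), μ', Cμ,
    fun w hw w' hw' => hK _ (neg_mem_pm_one hw') _ (neg_mem_pm_one hw),
    fun w hw => hσ _ (neg_mem_pm_one hw), hμ'_meas, hμ'_mem, hμ.congr hμμ'⟩
  have hM' : ∀ a b, ∫ x, A.ψ (x + a) * B.ψ (x + b) ≤ M := fun a b => by
    refine le_of_eq_of_le (integral_congr_ae ?_) (hM a b)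
    filter_upwards [(quasiMeasurePreserving_add_right volume a).ae_eq hφφ',
      (quasiMeasurePreserving_add_right volume b).ae_eq hμμ'] with x h₁ h₂
    simp only [Function.comp_apply] at h₁ h₂
    rw [h₁, h₂]
  have hM₀ : 0 ≤ M :=
    (integral_nonneg fun x => mul_nonneg (hφ_mem _).1 (hμ_mem _).1).trans (hM 0 0)
  exact ScatteringData.pairing_of_ae_eq (A := A) (B := B) hM₀ hM' hf hφφ' hg.timeReversal hμμ'
    k n hv' hu ht

/-- iterated scattering bound. For the Duhamel (source-iteration) components
`f^{(k)}`, `g^{(n)}` of the forward and adjoint solutions with constant-in-space kernel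
`K₁` on `V = {−1,1}`, one has
`0 ≤ ∫₀ᵀ∫_ℝ f^{(k)}(v') g^{(n)}(v) dx dt ≤ (2C_K)^{n+k} T^{n+k+1} C_{φμ}` and hence
`|∫₀ᵀ∫_I f^{(k)}(v')(g^{(n)}(v') − g^{(n)}(v)) dx dt| ≤ 2 (2C_K)^{n+k} T^{n+k+1} C_{φμ}`. -/
theorem iterated_scattering_bound
    (CK T Cφμ : ℝ) (hCK : 0 ≤ CK) (hT : 0 < T)
    (K₁ : ℝ → ℝ → ℝ)
    (hK₁ : ∀ v ∈ ({1, -1} : Set ℝ), ∀ v' ∈ ({1, -1} : Set ℝ),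
      0 ≤ K₁ v v' ∧ K₁ v v' ≤ CK)
    (σ₁ : ℝ → ℝ) (hσ : ∀ w, σ₁ w = K₁ 1 w + K₁ (-1) w)
    (φ₁ μ₁ : ℝ → ℝ)
    (hφ_int : Integrable φ₁) (hφ_bdd : ∃ C, ∀ x, φ₁ x ≤ C) (hφ_nonneg : ∀ x, 0 ≤ φ₁ x)
    (hμ_int : Integrable μ₁) (hμ_bdd : ∃ C, ∀ x, μ₁ x ≤ C) (hμ_nonneg : ∀ x, 0 ≤ μ₁ x)
    (hCφμ : ∀ a b : ℝ, (∫ x : ℝ, φ₁ (x + a) * μ₁ (x - T + b)) ≤ Cφμ)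
    (fseq gseq : ℕ → ℝ → ℝ → ℝ → ℝ)
    (hf0 : ∀ t x : ℝ, ∀ w ∈ ({1, -1} : Set ℝ),
      fseq 0 t x w = Real.exp (-t * σ₁ w) * φ₁ (x - w * t))
    (hg0 : ∀ t x : ℝ, ∀ w ∈ ({1, -1} : Set ℝ),
      gseq 0 t x w = Real.exp (-(T - t) * σ₁ w) * μ₁ (x + w * (T - t)))
    (hfrec : ∀ k : ℕ, ∀ t x : ℝ, ∀ w ∈ ({1, -1} : Set ℝ),
      fseq (k + 1) t x w = ∫ s in (0 : ℝ)..t, Real.exp (-s * σ₁ w) *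
        (K₁ w 1 * fseq k (t - s) (x - w * s) 1
          + K₁ w (-1) * fseq k (t - s) (x - w * s) (-1)))
    (hgrec : ∀ n : ℕ, ∀ t x : ℝ, ∀ w ∈ ({1, -1} : Set ℝ),
      gseq (n + 1) t x w = ∫ s in (0 : ℝ)..(T - t), Real.exp (-s * σ₁ w) *
        (K₁ 1 w * gseq n (t + s) (x + w * s) 1
          + K₁ (-1) w * gseq n (t + s) (x + w * s) (-1))) :
    ∀ k n : ℕ, ∀ v ∈ ({1, -1} : Set ℝ), ∀ v' ∈ ({1, -1} : Set ℝ),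
      (0 ≤ ∫ t in (0 : ℝ)..T, ∫ x : ℝ, fseq k t x v' * gseq n t x v) ∧
      ((∫ t in (0 : ℝ)..T, ∫ x : ℝ, fseq k t x v' * gseq n t x v)
          ≤ (2 * CK) ^ (n + k) * T ^ (n + k + 1) * Cφμ) ∧
      (∀ I : Set ℝ, MeasurableSet I →
        |∫ t in (0 : ℝ)..T, ∫ x in I, fseq k t x v' * (gseq n t x v' - gseq n t x v)|
          ≤ 2 * (2 * CK) ^ (n + k) * T ^ (n + k + 1) * Cφμ) := by
  obtain ⟨Cφ, hCφ⟩ := hφ_bdd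
  obtain ⟨Cμ, hCμ⟩ := hμ_bdd
  have hσ₀ : ∀ w ∈ 𝕍, 0 ≤ σ₁ w := fun w hw => by
    rw [hσ]; exact add_nonneg (hK₁ 1 (by simp) w hw).1 (hK₁ (-1) (by simp) w hw).1
  have hM : ∀ a b, ∫ x, φ₁ (x + a) * μ₁ (x + b) ≤ Cφμ := fun a b => by
    simpa only [sub_add_add_cancel] using hCφμ a (b + T)
  have hM₀ : 0 ≤ Cφμ :=
    (integral_nonneg fun x => mul_nonneg (hφ_nonneg _) (hμ_nonneg _)).trans (hM 0 0)
  intro k n v hv v' hv'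
  have hpair := fun {u} (hu : u ∈ 𝕍) {t} (ht : t ∈ Icc 0 T) => sourceIteration_pairing_le hK₁ hσ₀
    hφ_int (fun x => ⟨hφ_nonneg x, hCφ x⟩) hμ_int (fun x => ⟨hμ_nonneg x, hCμ x⟩) hM
    ⟨hf0, hfrec⟩ ⟨hg0, hgrec⟩ k n hv' hu ht
  obtain ⟨h₀, h₁⟩ := intervalIntegral_mem_Icc hT.le fun t ht =>
    ⟨integral_nonneg_of_ae (hpair hv ht).2.1, (hpair hv ht).2.2⟩
  have hB : (2 * CK) ^ (n + k) * T ^ (n + k + 1) * Cφμ = T * ((2 * CK * T) ^ (k + n) * Cφμ) := by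
    ring
  refine ⟨h₀, h₁.trans_eq hB.symm, fun I _ => ?_⟩
  have hI : ∀ t ∈ Ioc 0 T, |∫ x in I, fseq k t x v' * (gseq n t x v' - gseq n t x v)| ≤
      (2 * CK * T) ^ (k + n) * Cφμ := by
    intro t ht
    obtain ⟨hi₁, hp₁, hb₁⟩ := hpair hv' (Ioc_subset_Icc_self ht)
    obtain ⟨hi₂, hp₂, hb₂⟩ := hpair hv (Ioc_subset_Icc_self ht)
    simp only [mul_sub]
    exact abs_setIntegral_sub_le hi₁ hi₂ hp₁ hp₂ hb₁ hb₂ I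
  have hX : 0 ≤ T * ((2 * CK * T) ^ (k + n) * Cφμ) := by positivity
  linarith [abs_intervalIntegral_le hT.le hI]
end
end
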